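/- Let a and n be positive integers, let w_1, …, w_n be nonzero integers each of absolute value at least a, let λ = #{j : w_j < 0}, let ν(a) = #{j : w_j = a} and ν(−a) = #{j : w_j = −a}, and fix k ∈ {0, …, n}. Consider the Laurent polynomial F = e_k(t^{w_1}, …, t^{w_n}) · ∏_{j : w_j < 0} t^{−w_j} in ℤ[t, t^{−1}]. Then: (1) the coefficient of t^i in F is 0 for every integer i < 0, so F is a polynomial in t; (2) the coefficient of t^0 in F is 1 if λ = k and 0 otherwise; (3) the coefficient of t^i in F is 0 for every i with 0 < i < a; (4) the coefficient of t^a in F equals ν(a) if λ = k − 1, equals 0 if λ = k, equals ν(−a) if λ = k + 1, and equals 0 if |λ − k| ≥ 2. -/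

import Mathlib

/-!
With `N = {j | w j < 0}`, the summand of `F` indexed by `S` is `T ^ d(S)` with
`d(S) = ∑_{j ∈ S ∆ N} |w j|`. Since `D ↦ D ∆ N` is an involution, the coefficient of `T ^ i`
counts the sets `D` with `#(D ∆ N) = k` and `∑_{j ∈ D} |w j| = i`; in particular `d ≥ 0`.
As every `|w j| ≥ a > 0`, such a sum is `< a` only for `D = ∅`, and equals `a` only for
`D = {j}` with `w j = ± a`, in which case `#({j} ∆ N) = #N ∓ 1`.
-/

open Finset LaurentPolynomial
open scoped symmDiff

namespace LaurentPolynomial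

variable {R ι : Type*}

theorem prod_T [CommSemiring R] (s : Finset ι) (f : ι → ℤ) :
    ∏ j ∈ s, (T (f j) : R[T;T⁻¹]) = T (∑ j ∈ s, f j) :=
  (AddMonoidAlgebra.prod_single s f fun _ => 1).trans (by rw [prod_const_one]; rfl)

theorem coeff_sum_T [Semiring R] (s : Finset ι) (d : ι → ℤ) (i : ℤ) :
    (∑ x ∈ s, (T (d x) : R[T;T⁻¹])).coeff i = #{x ∈ s | d x = i} := by
  simp [AddMonoidAlgebra.coeff_sum, T_apply, Finset.sum_boole]

end LaurentPolynomial

namespace Finset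

variable {ι : Type*}

theorem sum_lt_iff_eq_empty {g : ι → ℤ} {a : ℤ} (ha : 0 < a) (hg : ∀ j, a ≤ g j)
    {D : Finset ι} : ∑ j ∈ D, g j < a ↔ D = ∅ := by
  refine ⟨fun h => ?_, by rintro rfl; simpa using ha⟩
  by_contra hD
  obtain ⟨j, hj⟩ := nonempty_iff_ne_empty.2 hD
  have := single_le_sum (fun i _ => (ha.trans_le (hg i)).le) hj
  linarith [hg j]

theorem sum_eq_iff_eq_singleton {g : ι → ℤ} {a : ℤ} (ha : 0 < a) (hg : ∀ j, a ≤ g j)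
    {D : Finset ι} : ∑ j ∈ D, g j = a ↔ ∃ j, g j = a ∧ D = {j} := by
  refine ⟨fun h => ?_, by rintro ⟨j, hj, rfl⟩; simpa using hj⟩
  have hD : D.Nonempty := nonempty_iff_ne_empty.2 fun hD => by simp [hD] at h; omega
  have hcard := card_nsmul_le_sum D g a fun j _ => hg j
  rw [h, nsmul_eq_mul] at hcard
  obtain ⟨j, rfl⟩ := card_eq_one.1 (by nlinarith [card_pos.2 hD])
  exact ⟨j, by simpa using h, rfl⟩

variable [DecidableEq ι]

theorem sum_add_sum_filter_neg_eq_sum_symmDiff_abs [Fintype ι] (w : ι → ℤ) (S : Finset ι) :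
    ∑ j ∈ S, w j + ∑ j ∈ {j | w j < 0}, -w j = ∑ j ∈ S ∆ ({j | w j < 0} : Finset ι), |w j| := by
  set N : Finset ι := {j | w j < 0}
  have hS : ∑ j ∈ S \ N, |w j| = ∑ j ∈ S \ N, w j :=
    sum_congr rfl fun j hj => abs_of_nonneg (by simpa [N] using (mem_sdiff.1 hj).2)
  have hN : ∑ j ∈ N \ S, |w j| = ∑ j ∈ N \ S, -w j :=
    sum_congr rfl fun j hj => abs_of_neg (by simpa [N] using (mem_sdiff.1 hj).1)
  rw [Finset.symmDiff_def, sum_union disjoint_sdiff_sdiff, hS, hN, sum_neg_distrib,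
    sum_neg_distrib, ← sub_eq_add_neg, ← sub_eq_add_neg, sum_sdiff_sub_sum_sdiff]

theorem card_powersetCard_filter_symmDiff [Fintype ι] (N : Finset ι) (k : ℕ)
    (p : Finset ι → Prop) [DecidablePred p] :
    #{S ∈ powersetCard k univ | p (S ∆ N)} = #{D | #(D ∆ N) = k ∧ p D} :=
  card_nbij' (· ∆ N) (· ∆ N) (fun S => by simp) (fun D => by simp)
    (fun S _ => symmDiff_symmDiff_cancel_right N S) (fun D _ => symmDiff_symmDiff_cancel_right N D)

theorem card_singleton_symmDiff (j : ι) (N : Finset ι) :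
    #({j} ∆ N) = if j ∈ N then #N - 1 else #N + 1 := by
  split_ifs with hj
  · rw [symmDiff_comm, ← card_erase_of_mem hj]
    congr 1
    ext x; by_cases x = j <;> simp [mem_symmDiff, *]
  · have hdisj : Disjoint N {j} := disjoint_singleton_right.2 hj
    rw [symmDiff_comm, symmDiff_eq_union hdisj, card_union_of_disjoint hdisj, card_singleton]

end Finset

section LocalContribution

variable {ι : Type*} [Fintype ι] [DecidableEq ι] (w : ι → ℤ) (k : ℕ)

noncomputable def localContribution : LaurentPolynomial ℤ :=
  (∑ S ∈ (univ : Finset ι).powersetCard k, ∏ j ∈ S, T (w j)) *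
    ∏ j ∈ (univ : Finset ι).filter fun j => w j < 0, T (-(w j))

theorem localContribution_eq_sum_T :
    localContribution w k =
      ∑ S ∈ powersetCard k univ, T (∑ j ∈ S ∆ ({j | w j < 0} : Finset ι), |w j|) := by
  rw [localContribution, sum_mul]
  refine sum_congr rfl fun S _ => ?_
  rw [prod_T, prod_T, ← T_add, sum_add_sum_filter_neg_eq_sum_symmDiff_abs]

theorem coeff_localContribution (i : ℤ) :
    (localContribution w k).coeff i =
      #{D | #(D ∆ ({j | w j < 0} : Finset ι)) = k ∧ ∑ j ∈ D, |w j| = i} := by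
  rw [localContribution_eq_sum_T, coeff_sum_T,
    card_powersetCard_filter_symmDiff _ _ fun D => ∑ j ∈ D, |w j| = i]

theorem exists_toLaurent_eq_localContribution :
    ∃ F : Polynomial ℤ, Polynomial.toLaurent F = localContribution w k := by
  refine ⟨∑ S ∈ powersetCard k univ,
    Polynomial.X ^ (∑ j ∈ S ∆ ({j | w j < 0} : Finset ι), |w j|).toNat, ?_⟩
  rw [localContribution_eq_sum_T, map_sum]
  refine sum_congr rfl fun S _ => ?_
  rw [Polynomial.toLaurent_X_pow, Int.toNat_of_nonneg (sum_nonneg fun j _ => abs_nonneg (w j))]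

variable {w} {a : ℤ} (ha : 0 < a) (hw : ∀ j, a ≤ |w j|)
include ha hw

theorem coeff_localContribution_of_lt {i : ℤ} (hi : i < a) :
    (localContribution w k).coeff i = if i = 0 ∧ #{j | w j < 0} = k then 1 else 0 := by
  have hD : ∀ D : Finset ι, #(D ∆ ({j | w j < 0} : Finset ι)) = k ∧ ∑ j ∈ D, |w j| = i ↔
      D = ∅ ∧ i = 0 ∧ #{j | w j < 0} = k := by
    refine fun D => ⟨fun ⟨hk, hs⟩ => ?_, ?_⟩
    · obtain rfl := (sum_lt_iff_eq_empty ha hw).1 (hs ▸ hi)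
      rw [← bot_eq_empty, bot_symmDiff] at hk
      exact ⟨rfl, by simpa using hs.symm, hk⟩
    · rintro ⟨rfl, rfl, hk⟩
      rw [← bot_eq_empty, bot_symmDiff]
      exact ⟨hk, sum_empty⟩
  rw [coeff_localContribution]
  simp only [hD]
  split_ifs with h <;> simp [h, filter_eq']

theorem coeff_localContribution_self :
    (localContribution w k).coeff a =
      (if #{j | w j < 0} + 1 = k then (#{j | w j = a} : ℤ) else 0) +
        (if #{j | w j < 0} = k + 1 then (#{j | w j = -a} : ℤ) else 0) := by
  set N : Finset ι := {j | w j < 0}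
  have hD : ({D | #(D ∆ N) = k ∧ ∑ j ∈ D, |w j| = a} : Finset (Finset ι)) =
      ({j | |w j| = a ∧ #({j} ∆ N) = k} : Finset ι).map ⟨singleton, singleton_injective⟩ := by
    ext D
    simp only [sum_eq_iff_eq_singleton ha hw, mem_filter, mem_univ, true_and, mem_map]
    aesop
  have hj : ∀ j, |w j| = a ∧ #({j} ∆ N) = k ↔
      (w j = a ∧ #N + 1 = k) ∨ (w j = -a ∧ #N = k + 1) := by
    intro j
    rw [abs_eq ha.le, card_singleton_symmDiff]
    have hN : j ∈ N ↔ w j < 0 := by simp [N]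
    split_ifs with hjN
    · have := card_pos.2 ⟨j, hjN⟩
      rw [hN] at hjN
      omega
    · rw [hN] at hjN
      omega
  rw [coeff_localContribution, hD, card_map]
  simp only [hj, filter_or]
  rw [card_union_of_disjoint (disjoint_filter.2 fun j _ h1 h2 => by omega)]
  simp only [filter_and, filter_const]
  split_ifs <;> simp

end LocalContribution

theorem laurent_local_contribution_coeffs_general
    (a : ℤ) (ha : 0 < a) (n : ℕ) (w : Fin n → ℤ)
    (hw : ∀ j, w j ≠ 0 ∧ a ≤ |w j|) (k : ℕ) :
    let lam : ℕ := ((univ : Finset (Fin n)).filter fun j => w j < 0).card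
    let nua : ℤ := (((univ : Finset (Fin n)).filter fun j => w j = a).card : ℤ)
    let numa : ℤ := (((univ : Finset (Fin n)).filter fun j => w j = -a).card : ℤ)
    let F : LaurentPolynomial ℤ :=
      (∑ S ∈ (univ : Finset (Fin n)).powersetCard k, ∏ j ∈ S, T (w j)) *
        ∏ j ∈ (univ : Finset (Fin n)).filter fun j => w j < 0, T (-(w j))
    ((∀ i : ℤ, i < 0 → F.coeff i = 0) ∧
        ∃ F' : Polynomial ℤ, Polynomial.toLaurent F' = F) ∧
      (F.coeff 0 = if lam = k then 1 else 0) ∧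
      (∀ i : ℤ, 0 < i → i < a → F.coeff i = 0) ∧
      ((lam + 1 = k → F.coeff a = nua) ∧
        (lam = k → F.coeff a = 0) ∧
        (lam = k + 1 → F.coeff a = numa) ∧
        (2 ≤ |(lam : ℤ) - (k : ℤ)| → F.coeff a = 0)) := by
  intro lam nua numa F
  have hwa (j : Fin n) : a ≤ |w j| := (hw j).2
  have hlow (i : ℤ) (hi : i < a) : F.coeff i = if i = 0 ∧ lam = k then 1 else 0 :=
    coeff_localContribution_of_lt k ha hwa hi
  have hself : F.coeff a = (if lam + 1 = k then nua else 0) + if lam = k + 1 then numa else 0 :=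
    coeff_localContribution_self k ha hwa
  refine ⟨⟨fun i hi => ?_, exists_toLaurent_eq_localContribution w k⟩, ?_,
    fun i hi hia => ?_, fun h => ?_, fun h => ?_, fun h => ?_, fun h => ?_⟩
  · simp [hlow i (hi.trans ha), hi.ne]
  · simp [hlow 0 ha]
  · simp [hlow i hia, hi.ne']
  all_goals rw [hself]
  · split_ifs <;> omega
  · split_ifs <;> omega
  · split_ifs <;> omega
  · rcases le_abs.1 h with h | h <;> split_ifs <;> omega

/-- the low-order coefficients of the Laurent polynomial
`F = e_k(t^{w_1},…,t^{w_n}) · ∏_{w_j<0} t^{-w_j}` in `ℤ[T;T⁻¹]`, where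
`w_1,…,w_n` are nonzero integers of absolute value at least `a > 0`,
`λ = #{j : w_j < 0}`, `ν(a) = #{j : w_j = a}`, `ν(-a) = #{j : w_j = -a}`, and
`k ≤ n`.  (Coefficients of a Laurent polynomial are obtained by applying it as
a finitely supported function `ℤ →₀ ℤ`.)  Then: (1) all coefficients in
negative degrees vanish, so `F` is (the image of) a polynomial; (2) the
constant coefficient is `1` if `λ = k` and `0` otherwise; (3) the coefficients
in degrees `0 < i < a` vanish; (4) the coefficient in degree `a` is `ν(a)` if
`λ = k - 1`, is `0` if `λ = k`, is `ν(-a)` if `λ = k + 1`, and is `0` if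
`|λ - k| ≥ 2`. -/
theorem laurent_local_contribution_coeffs
    (a : ℤ) (ha : 0 < a) (n : ℕ) (hn : 0 < n) (w : Fin n → ℤ)
    (hw : ∀ j, w j ≠ 0 ∧ a ≤ |w j|) (k : ℕ) (hk : k ≤ n) :
    let lam : ℕ := ((univ : Finset (Fin n)).filter fun j => w j < 0).card
    let nua : ℤ := (((univ : Finset (Fin n)).filter fun j => w j = a).card : ℤ)
    let numa : ℤ := (((univ : Finset (Fin n)).filter fun j => w j = -a).card : ℤ)
    let F : LaurentPolynomial ℤ :=
      (∑ S ∈ (univ : Finset (Fin n)).powersetCard k, ∏ j ∈ S, T (w j)) *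
        ∏ j ∈ (univ : Finset (Fin n)).filter fun j => w j < 0, T (-(w j))
    ((∀ i : ℤ, i < 0 → F.coeff i = 0) ∧
        ∃ F' : Polynomial ℤ, Polynomial.toLaurent F' = F) ∧
      (F.coeff 0 = if lam = k then 1 else 0) ∧
      (∀ i : ℤ, 0 < i → i < a → F.coeff i = 0) ∧
      ((lam + 1 = k → F.coeff a = nua) ∧
        (lam = k → F.coeff a = 0) ∧
        (lam = k + 1 → F.coeff a = numa) ∧
        (2 ≤ |(lam : ℤ) - (k : ℤ)| → F.coeff a = 0)) :=
  laurent_local_contribution_coeffs_general a ha n w hw k
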